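/- arXiv:2001.09337 — 5 statements merged into one kernel-verified Lean document; each statement's English description precedes it below -/
import Mathlib

section
/- Let k be a field and C a k-linear abelian symmetric monoidal category which admits all small colimits, in which the tensor product commutes with small colimits in each variable, and for which the canonical ring homomorphism k → End_C(𝟙) is bijective. Assume C is pointed, i.e. there exist a ring R and a faithful exact k-linear monoidal functor ϑ : C → Mod(R) preserving small colimits. Then every k-linear monoidal functor τ : Mod(k) → C preserving small colimits is faithful and exact. (The paper's Proposition that the trivial-object functor is faithful exact when C is pointed.) -/
open CategoryTheory CategoryTheory.Limits CategoryTheory.MonoidalCategory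

universe v u w

/-!
Over a field every linear map `f` has a generalized inverse `g` with `f g f = f`. The kernel of `f`
is then split off by the idempotent `1 - g f`, and the identities exhibiting this survive any
additive functor, so `τ` preserves kernels; it preserves cokernels because it preserves colimits.
For faithfulness, a nonzero linear map `d` factors the identity of `k` as `a ≫ d ≫ b`, so if `τ`
kills `d` then `τ k ≅ 𝟙_ C` is zero, which `End(𝟙_ C) ≅ k` forbids.
-/

theorem LinearMap.exists_comp_comp_eq_self {K V V' : Type*} [DivisionRing K] [AddCommGroup V]
    [Module K V] [AddCommGroup V'] [Module K V'] (f : V →ₗ[K] V') :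
    ∃ g : V' →ₗ[K] V, f ∘ₗ g ∘ₗ f = f := by
  obtain ⟨s, hs⟩ := f.rangeRestrict.exists_rightInverse_of_surjective f.range_rangeRestrict
  obtain ⟨p, hp⟩ := f.range.subtype.exists_leftInverse_of_injective f.range.ker_subtype
  refine ⟨s ∘ₗ p, LinearMap.ext fun x => ?_⟩
  have hpf : p (f x) = f.rangeRestrict x := LinearMap.congr_fun hp (f.rangeRestrict x)
  simpa [hpf] using congrArg Subtype.val (LinearMap.congr_fun hs (f.rangeRestrict x))

namespace CategoryTheory.Limits

variable {C D : Type*} [Category C] [Category D] [Preadditive C] [Preadditive D]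

def KernelFork.IsLimit.ofRetraction {K X Y : C} {ι : K ⟶ X} {f : X ⟶ Y} (w : ι ≫ f = 0)
    (r : X ⟶ K) (g : Y ⟶ X) (hι : ι ≫ r = 𝟙 K) (hr : r ≫ ι = 𝟙 X - f ≫ g) :
    IsLimit (KernelFork.ofι ι w) :=
  KernelFork.IsLimit.ofι _ _ (fun l _ => l ≫ r)
    (fun l hl => by simp [hr, Preadditive.comp_sub, reassoc_of% hl])
    (fun l _ m hm => by rw [← hm, Category.assoc, hι, Category.comp_id])

lemma preservesKernel_of_comp_comp_eq_self (F : C ⥤ D) [F.Additive] {X Y : C} {f : X ⟶ Y}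
    [HasKernel f] {g : Y ⟶ X} (hfgf : f ≫ g ≫ f = f) :
    PreservesLimit (parallelPair f 0) F := by
  let r := kernel.lift f (𝟙 X - f ≫ g) (by simp [Preadditive.sub_comp, hfgf])
  have hr : r ≫ kernel.ι f = 𝟙 X - f ≫ g := kernel.lift_ι _ _ _
  have hι : kernel.ι f ≫ r = 𝟙 _ := by
    ext
    simp [hr, Preadditive.comp_sub]
  refine preservesLimit_of_preserves_limit_cone (kernelIsKernel f) ?_
  refine (isLimitMapConeForkEquiv' F (kernel.condition f)).symm ?_
  exact KernelFork.IsLimit.ofRetraction _ (F.map r) (F.map g)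
    (by rw [← F.map_comp, hι, F.map_id])
    (by rw [← F.map_comp, hr, F.map_sub, F.map_id, F.map_comp])

end CategoryTheory.Limits

namespace ModuleCat

variable {k : Type u} [DivisionRing k] {D : Type*} [Category D] [Preadditive D]

lemma exists_comp_comp_eq_self {M N : ModuleCat.{u} k} (f : M ⟶ N) :
    ∃ g : N ⟶ M, f ≫ g ≫ f = f := by
  obtain ⟨g, hg⟩ := f.hom.exists_comp_comp_eq_self
  exact ⟨ofHom g, hom_ext hg⟩

lemma preservesFiniteLimits_of_additive [HasZeroObject D] (F : ModuleCat.{u} k ⥤ D)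
    [F.Additive] : PreservesFiniteLimits F := by
  have (X Y : ModuleCat.{u} k) (f : X ⟶ Y) : PreservesLimit (parallelPair f 0) F :=
    let ⟨_, hg⟩ := exists_comp_comp_eq_self f
    preservesKernel_of_comp_comp_eq_self F hg
  exact Functor.preservesFiniteLimits_of_preservesKernels F

lemma exists_comp_comp_eq_id_of_ne_zero {M N : ModuleCat.{u} k} {d : M ⟶ N} (hd : d ≠ 0) :
    ∃ (a : of k k ⟶ M) (b : N ⟶ of k k), a ≫ d ≫ b = 𝟙 _ := by
  obtain ⟨x, hx⟩ : ∃ x, d x ≠ 0 := by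
    by_contra! h
    exact hd (hom_ext (LinearMap.ext h))
  obtain ⟨b, hb⟩ :=
    (LinearMap.toSpanSingleton k N (d x)).exists_leftInverse_of_injective 
      (LinearMap.ker_toSpanSingleton (R := k) hx)
  refine ⟨ofHom (LinearMap.toSpanSingleton k M x), ofHom b, hom_ext (LinearMap.ext_ring ?_)⟩
  simpa using LinearMap.congr_fun hb 1

lemma faithful_of_not_isZero (F : ModuleCat.{u} k ⥤ D) [F.Additive]
    (hF : ¬ IsZero (F.obj (of k k))) : F.Faithful where
  map_injective {M N f g} hfg := by
    by_contra hne
    obtain ⟨a, b, hab⟩ := exists_comp_comp_eq_id_of_ne_zero (sub_ne_zero.mpr hne)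
    refine hF ((IsZero.iff_id_eq_zero _).mpr ?_)
    rw [← F.map_id, ← hab, F.map_comp, F.map_comp, F.map_sub, hfg, sub_self, zero_comp, comp_zero]

end ModuleCat

/-- **Proposition 2.6 of Nagy–Szamuely**: if `C` is pointed, i.e. there is a faithful exact
`k`-linear monoidal functor `ϑ : C ⥤ Mod(R)` preserving small colimits for some
(commutative) ring `R`, then every `k`-linear colimit-preserving monoidal functor
`τ : Mod(k) ⥤ C` is faithful and exact. -/
theorem stmt3 (k : Type u) [Field k]
    (C : Type v) [Category.{u} C] [Abelian C] [CategoryTheory.Linear k C]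
    [MonoidalCategory C] [SymmetricCategory C] [HasColimits C]
    [∀ X : C, PreservesColimits (tensorLeft X)]
    [∀ X : C, PreservesColimits (tensorRight X)]
    (hk : Function.Bijective (fun a : k => a • (𝟙 (𝟙_ C))))
    -- `C` is pointed by a faithful exact `k`-linear monoidal functor to `Mod(R)`:
    (R : Type w) [CommRing R] [Algebra k R]
    (ϑ : C ⥤ ModuleCat.{w} R) [ϑ.Monoidal] [ϑ.Additive] [ϑ.Linear k]
    [ϑ.Faithful] [PreservesFiniteLimits ϑ] [PreservesFiniteColimits ϑ]
    [PreservesColimits ϑ]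
    (τ : ModuleCat.{u} k ⥤ C) [τ.Monoidal] [τ.Additive] [τ.Linear k]
    [PreservesColimits τ] :
    τ.Faithful ∧ PreservesFiniteLimits τ ∧ PreservesFiniteColimits τ := by
  have hunit : ¬ IsZero (𝟙_ C) := fun h =>
    one_ne_zero (hk.injective (by simp [(IsZero.iff_id_eq_zero _).mp h]))
  exact ⟨ModuleCat.faithful_of_not_isZero τ fun h => hunit (h.of_iso (Functor.Monoidal.εIso τ)),
    ModuleCat.preservesFiniteLimits_of_additive τ, inferInstance⟩
end

section
/- Let R be a nontrivial commutative ring equipped with an iterative derivation {∂_i}_{i ≥ 0}, and assume the ID-ring (R, {∂_i}) is simple. Then R is an integral domain. (Part (1) of the paper's Proposition on simple ID-rings.) -/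
universe u

section stmt7aux

variable {R : Type u} [CommRing R] (d : ℕ → R →+ R)

/-- Auxiliary: if `d j x` is in the nilradical for all `j < i`, then `d k (x ^ n)` is in the
nilradical for all `k < n * i`. -/
lemma stmt7_auxB
    (hmul : ∀ (i : ℕ) (r s : R),
      d i (r * s) = ∑ p ∈ Finset.HasAntidiagonal.antidiagonal i, d p.1 r * d p.2 s)
    (x : R) (i : ℕ) (hIH : ∀ j < i, d j x ∈ nilradical R) :
    ∀ n k, k < n * i → d k (x ^ n) ∈ nilradical R := by
  intro n
  induction n with
  | zero => intro k hk; simp at hk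
  | succ n ih =>
    intro k hk
    rw [pow_succ, hmul]
    refine Ideal.sum_mem _ fun p hp => ?_
    have hpa : p.1 + p.2 = k := Finset.HasAntidiagonal.mem_antidiagonal.mp hp
    by_cases hc : p.2 < i
    · exact Ideal.mul_mem_left _ _ (hIH _ hc)
    · have hk' : k < n * i + i := by
        have : (n + 1) * i = n * i + i := by ring
        rwa [this] at hk
      have hle : p.1 + i ≤ k := by omega
      have hlt : p.1 < n * i := by
        have := lt_of_le_of_lt hle hk'
        exact Nat.lt_of_add_lt_add_right this
      exact Ideal.mul_mem_right _ _ (ih _ hlt)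

/-- Auxiliary: if `d j x` is in the nilradical for all `j < i`, then
`d (n * i) (x ^ n) ≡ (d i x) ^ n` modulo the nilradical. -/
lemma stmt7_auxA
    (h0 : ∀ r : R, d 0 r = r)
    (hmul : ∀ (i : ℕ) (r s : R),
      d i (r * s) = ∑ p ∈ Finset.HasAntidiagonal.antidiagonal i, d p.1 r * d p.2 s)
    (x : R) (i : ℕ) (hIH : ∀ j < i, d j x ∈ nilradical R) :
    ∀ n, d (n * i) (x ^ n) - (d i x) ^ n ∈ nilradical R := by
  intro n
  induction n with
  | zero => simp [h0]
  | succ n ih =>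
    rw [pow_succ, hmul]
    have hmem : ((n * i, i) : ℕ × ℕ) ∈ Finset.HasAntidiagonal.antidiagonal ((n + 1) * i) := by
      rw [Finset.HasAntidiagonal.mem_antidiagonal]; ring
    rw [← Finset.sum_erase_add _ _ hmem]
    have h1 : d (n * i) (x ^ n) * d i x - (d i x) ^ (n + 1) ∈ nilradical R := by
      have h := Ideal.mul_mem_right (d i x) _ ih
      have heq : (d (n * i) (x ^ n) - (d i x) ^ n) * d i x
          = d (n * i) (x ^ n) * d i x - (d i x) ^ (n + 1) := by ring
      rwa [heq] at h
    have h2 : ∑ p ∈ (Finset.HasAntidiagonal.antidiagonal ((n + 1) * i)).erase (n * i, i),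
        d p.1 (x ^ n) * d p.2 x ∈ nilradical R := by
      refine Ideal.sum_mem _ fun p hp => ?_
      have hne : p ≠ (n * i, i) := Finset.ne_of_mem_erase hp
      have hpa : p.1 + p.2 = (n + 1) * i :=
        Finset.HasAntidiagonal.mem_antidiagonal.mp (Finset.mem_of_mem_erase hp)
      have hpa' : p.1 + p.2 = n * i + i := by
        have : (n + 1) * i = n * i + i := by ring
        rwa [this] at hpa
      by_cases hc : p.2 < i
      · exact Ideal.mul_mem_left _ _ (hIH _ hc)
      · rcases lt_or_eq_of_le (le_of_not_gt hc) with h | h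
        · -- i < p.2, so p.1 < n * i
          have hlt : p.1 < n * i := by
            have h3 : p.1 + i < n * i + i := by
              calc p.1 + i < p.1 + p.2 := Nat.add_lt_add_left h p.1
                _ = n * i + i := hpa'
            exact Nat.lt_of_add_lt_add_right h3
          exact Ideal.mul_mem_right _ _ (stmt7_auxB d hmul x i hIH n _ hlt)
        · exfalso
          apply hne
          have hp1 : p.1 = n * i := by omega
          exact Prod.ext hp1 h.symm
    have heq2 : (∑ p ∈ (Finset.HasAntidiagonal.antidiagonal ((n + 1) * i)).erase (n * i, i),
          d p.1 (x ^ n) * d p.2 x) + d (n * i) (x ^ n) * d i x - (d i x) ^ (n + 1)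
        = (∑ p ∈ (Finset.HasAntidiagonal.antidiagonal ((n + 1) * i)).erase (n * i, i),
          d p.1 (x ^ n) * d p.2 x)
          + (d (n * i) (x ^ n) * d i x - (d i x) ^ (n + 1)) := by ring
    rw [heq2]
    exact Ideal.add_mem _ h2 h1

/-- The nilradical is stable under an iterative derivation. -/
lemma stmt7_nilstable
    (h0 : ∀ r : R, d 0 r = r)
    (hmul : ∀ (i : ℕ) (r s : R),
      d i (r * s) = ∑ p ∈ Finset.HasAntidiagonal.antidiagonal i, d p.1 r * d p.2 s)
    (x : R) (hx : IsNilpotent x) (i : ℕ) : d i x ∈ nilradical R := by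
  induction i using Nat.strong_induction_on with
  | _ i IH =>
    obtain ⟨n, hn⟩ := hx
    have hIH : ∀ j < i, d j x ∈ nilradical R := fun j hj => IH j hj
    have h := stmt7_auxA d h0 hmul x i hIH n
    rw [hn, map_zero, zero_sub] at h
    have h2 : (d i x) ^ n ∈ nilradical R := by
      have := neg_mem_iff.mpr h
      simpa using this
    rw [mem_nilradical] at h2 ⊢
    exact h2.of_pow

end stmt7aux

/-- **Part (1) of Proposition 5.2 of Nagy–Szamuely** (after Matzat–van der Put): a simple
iterative differential ring is an integral domain. Here `d` is an iterative derivation on the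
nontrivial commutative ring `R`, and simplicity means that the only ideals stable under all
the `d i` are `0` and `R`. -/
theorem stmt7 (R : Type u) [CommRing R] [Nontrivial R]
    (d : ℕ → R →+ R)
    (h0 : ∀ r : R, d 0 r = r)
    (hmul : ∀ (i : ℕ) (r s : R),
      d i (r * s) = ∑ p ∈ Finset.HasAntidiagonal.antidiagonal i, d p.1 r * d p.2 s)
    (hcomp : ∀ (i j : ℕ) (r : R), d i (d j r) = (i + j).choose i • d (i + j) r)
    (hsimple : ∀ I : Ideal R, (∀ (i : ℕ), ∀ x ∈ I, d i x ∈ I) → I = ⊥ ∨ I = ⊤) :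
    IsDomain R := by
  -- Step 1: R is reduced.
  have hnil : nilradical R = ⊥ := by
    rcases hsimple (nilradical R)
        (fun i x hx => stmt7_nilstable d h0 hmul x (mem_nilradical.mp hx) i) with h | h
    · exact h
    · exfalso
      have : (1 : R) ∈ nilradical R := h ▸ Submodule.mem_top
      obtain ⟨n, hn⟩ := mem_nilradical.mp this
      rw [one_pow] at hn
      exact one_ne_zero hn
  have hred : IsReduced R := by
    refine ⟨fun x hx => ?_⟩
    have : x ∈ nilradical R := mem_nilradical.mpr hx
    rw [hnil] at this
    exact Ideal.mem_bot.mp this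
  -- Step 2: no zero divisors, via the annihilator ideal of b.
  have hnzd : ∀ a b : R, a * b = 0 → a = 0 ∨ b = 0 := by
    intro a b hab
    set I : Ideal R :=
      { carrier := {x | x * b = 0}
        add_mem' := fun {x y} hx hy => by
          simp only [Set.mem_setOf_eq] at *
          rw [add_mul, hx, hy, add_zero]
        zero_mem' := by simp
        smul_mem' := fun c x hx => by
          simp only [Set.mem_setOf_eq, smul_eq_mul] at *
          rw [mul_assoc, hx, mul_zero] } with hI
    have hstab : ∀ (i : ℕ), ∀ x ∈ I, d i x ∈ I := by
      intro i
      induction i using Nat.strong_induction_on with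
      | _ i IH =>
        intro x hx
        have hxb : x * b = 0 := hx
        show d i x * b = 0
        have hsum : ∑ p ∈ Finset.HasAntidiagonal.antidiagonal i, d p.1 x * d p.2 b = 0 := by
          rw [← hmul, hxb, map_zero]
        have hmem0 : ((i, 0) : ℕ × ℕ) ∈ Finset.HasAntidiagonal.antidiagonal i := by
          simp [Finset.HasAntidiagonal.mem_antidiagonal]
        have hsum' : (∑ p ∈ (Finset.HasAntidiagonal.antidiagonal i).erase (i, 0),
            d p.1 x * d p.2 b) + d i x * d 0 b = 0 := by
          rw [Finset.sum_erase_add _ _ hmem0] at *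
          exact hsum
        -- multiply by b; the erased terms die by induction
        have hkill : ∀ p ∈ (Finset.HasAntidiagonal.antidiagonal i).erase (i, 0),
            (d p.1 x * d p.2 b) * b = 0 := by
          intro p hp
          have hne : p ≠ (i, 0) := Finset.ne_of_mem_erase hp
          have hpa : p.1 + p.2 = i :=
            Finset.HasAntidiagonal.mem_antidiagonal.mp (Finset.mem_of_mem_erase hp)
          have hp1 : p.1 < i := by
            rcases Nat.lt_or_ge p.1 i with h | h
            · exact h
            · exfalso; apply hne
              have h1 : p.1 = i := by omega
              have h2 : p.2 = 0 := by omega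
              exact Prod.ext h1 h2
          have hib : d p.1 x * b = 0 := IH p.1 hp1 x hx
          calc (d p.1 x * d p.2 b) * b = (d p.1 x * b) * d p.2 b := by ring
            _ = 0 := by rw [hib, zero_mul]
        have hbb : d i x * b * b = 0 := by
          have := congrArg (· * b) hsum'
          simp only [add_mul, zero_mul] at this
          rw [Finset.sum_mul, Finset.sum_eq_zero hkill, zero_add, h0] at this
          exact this
        have hsq : (d i x * b) * (d i x * b) = 0 := by
          calc (d i x * b) * (d i x * b) = (d i x * b * b) * d i x := by ring
            _ = 0 := by rw [hbb, zero_mul]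
        have : IsNilpotent (d i x * b) := ⟨2, by rw [pow_two]; exact hsq⟩
        exact hred.eq_zero _ this
    rcases hsimple I hstab with h | h
    · left
      have : a ∈ I := hab
      rw [h] at this
      exact Ideal.mem_bot.mp this
    · right
      have : (1 : R) ∈ I := h ▸ Submodule.mem_top
      have h1 : (1 : R) * b = 0 := this
      rwa [one_mul] at h1
  have : NoZeroDivisors R :=
    ⟨fun {a b} hab => hnzd a b hab⟩
  exact NoZeroDivisors.to_isDomain R
end

section
/- Let R be a nontrivial commutative ring equipped with an iterative derivation {∂_i}_{i ≥ 0} such that the ID-ring (R, {∂_i}) is simple, let K = Frac(R) be its field of fractions, and let {D_i}_{i ≥ 0} be an iterative derivation on K extending {∂_i} (D_i(r/1) = ∂_i(r)/1 for all r ∈ R). Then the constants of (K, {D_i}) come from R: every x ∈ K with D_i(x) = 0 for all i ≥ 1 is of the form r/1 for some r ∈ R with ∂_i(r) = 0 for all i ≥ 1. (The assertion of the paper's Proposition on simple ID-rings that the constant field of the fraction field equals the constant ring of R.) -/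
universe u

/-- **Part of Proposition 5.2 of Nagy–Szamuely** (after Matzat–van der Put): if `(R, d)` is a
simple iterative differential ring and `D` is an iterative derivation on `K = Frac(R)`
extending `d`, then every constant of `(K, D)` comes from a constant of `R`. -/
theorem stmt10 (R : Type u) [CommRing R] [Nontrivial R]
    (d : ℕ → R →+ R)
    (h0 : ∀ r : R, d 0 r = r)
    (hmul : ∀ (i : ℕ) (r s : R),
      d i (r * s) = ∑ p ∈ Finset.HasAntidiagonal.antidiagonal i, d p.1 r * d p.2 s)
    (hcomp : ∀ (i j : ℕ) (r : R), d i (d j r) = (i + j).choose i • d (i + j) r)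
    (hsimple : ∀ I : Ideal R, (∀ (i : ℕ), ∀ x ∈ I, d i x ∈ I) → I = ⊥ ∨ I = ⊤)
    (D : ℕ → FractionRing R →+ FractionRing R)
    (hD0 : ∀ x : FractionRing R, D 0 x = x)
    (hDmul : ∀ (i : ℕ) (x y : FractionRing R),
      D i (x * y) = ∑ p ∈ Finset.HasAntidiagonal.antidiagonal i, D p.1 x * D p.2 y)
    (hDcomp : ∀ (i j : ℕ) (x : FractionRing R), D i (D j x) = (i + j).choose i • D (i + j) x)
    (hDext : ∀ (i : ℕ) (r : R),
      D i (algebraMap R (FractionRing R) r) = algebraMap R (FractionRing R) (d i r)) :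
    ∀ x : FractionRing R, (∀ i : ℕ, 1 ≤ i → D i x = 0) →
      ∃ r : R, (∀ i : ℕ, 1 ≤ i → d i r = 0) ∧ x = algebraMap R (FractionRing R) r := by
  intro x hx
  let φ := algebraMap R (FractionRing R)
  show ∃ r : R, (∀ i : ℕ, 1 ≤ i → d i r = 0) ∧ x = φ r
  have key : ∀ (i : ℕ) (r : R), D i (φ r * x) = φ (d i r) * x := by
    intro i r
    rw [hDmul]
    rw [Finset.sum_eq_single (i, 0)]
    · rw [hD0, hDext]
    · rintro ⟨a, b⟩ hab hne
      have hb : 1 ≤ b := by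
        rcases Nat.eq_zero_or_pos b with h | h
        · exfalso
          apply hne
          simp only [Finset.HasAntidiagonal.mem_antidiagonal] at hab
          subst h
          simp only [Nat.add_zero] at hab
          simp [hab]
        · exact h
      rw [hx b hb, mul_zero]
    · intro h
      exact absurd (by simp [Finset.HasAntidiagonal.mem_antidiagonal]) h
  let I : Ideal R := {
    carrier := {r : R | ∃ s : R, φ r * x = φ s}
    add_mem' := by
      rintro a b ⟨s, hs⟩ ⟨t, ht⟩
      exact ⟨s + t, by rw [map_add, add_mul, hs, ht, map_add]⟩
    zero_mem' := ⟨0, by simp⟩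
    smul_mem' := by
      rintro c a ⟨s, hs⟩
      exact ⟨c * s, by rw [smul_eq_mul, map_mul, map_mul, mul_assoc, hs]⟩ }
  have hIstable : ∀ (i : ℕ), ∀ r ∈ I, d i r ∈ I := by
    rintro i r ⟨s, hs⟩
    exact ⟨d i s, by rw [← key, hs, hDext]⟩
  rcases hsimple I hIstable with hbot | htop
  · exfalso
    obtain ⟨⟨a, b⟩, hab⟩ := IsLocalization.surj (nonZeroDivisors R) x
    have hbI : (b : R) ∈ I := ⟨a, by rw [mul_comm]; exact hab⟩
    rw [hbot, Ideal.mem_bot] at hbI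
    exact nonZeroDivisors.ne_zero b.2 hbI
  · have h1 : (1 : R) ∈ I := htop ▸ Submodule.mem_top
    obtain ⟨r, hr⟩ := h1
    rw [map_one, one_mul] at hr
    refine ⟨r, ?_, hr⟩
    intro i hi
    have h2 := hx i hi
    rw [hr, hDext] at h2
    exact IsFractionRing.injective R (FractionRing R) (by rw [h2, map_zero])
end

section
/- Let R be a nontrivial commutative ring equipped with an iterative derivation {∂_i}_{i ≥ 0} such that the ID-ring (R, {∂_i}) is simple. Let M be a finitely generated R-module equipped with an iterative connection {∇_i}_{i ≥ 0} over (R, {∂_i}), and let N ⊆ M be an R-submodule with ∇_i(N) ⊆ N for all i (an ID-submodule). Then both N and the quotient M/N are projective R-modules. (The assertion of the paper's Proposition that all ID-subquotients of a finitely generated ID-module over a simple ID-ring are projective.) -/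
/-!
Let `J ⊆ R` be the ideal of those `r` with `r • id_M = ∑ fᵢ(·) • xᵢ` for finitely many
`fᵢ : M →ₗ[R] R` and `xᵢ ∈ M`; then `M` is projective as soon as `1 ∈ J`. Since
`∂_t(r) • m = ∑_{a+b=t} (-1)^b ∇_a (r • ∇_b m)`, applying the connection induced on `End(M)` to
such a decomposition of `r • id_M` yields one of `∂_t(r) • id_M`, the `fᵢ` being replaced by their
images under the connection induced on `Hom(M, R)`; so `J` is an ID-ideal. It is nonzero: if `δ` is
a nonzero minor of maximal size among the relations of a presentation `π : Rⁿ → M`, then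
`δ² • id_M` factors through `π`, and `δ² ≠ 0` because the nilradical is an ID-ideal, hence zero.
So `J = R`. For `M ⧸ N` this splits `M → M ⧸ N`, so `N` is finitely generated as well, and the
same argument applies to it.
-/

open Finset

namespace Finset.Nat

theorem sum_antidiagonal_antidiagonal_comm {A : Type*} [AddCommMonoid A] (n : ℕ)
    (F : ℕ → ℕ → ℕ → ℕ → A) :
    ∑ pb ∈ antidiagonal n, ∑ xy ∈ antidiagonal pb.1, ∑ uv ∈ antidiagonal pb.2,
        F xy.1 xy.2 uv.1 uv.2 =
      ∑ wz ∈ antidiagonal n, ∑ xu ∈ antidiagonal wz.1, ∑ yv ∈ antidiagonal wz.2,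
        F xu.1 yv.1 xu.2 yv.2 := by
  simp_rw [← sum_product']
  rw [sum_sigma', sum_sigma']
  let τ : (_ : ℕ × ℕ) × (ℕ × ℕ) × (ℕ × ℕ) → (_ : ℕ × ℕ) × (ℕ × ℕ) × (ℕ × ℕ) :=
    fun ⟨_, (x, y), (u, v)⟩ => ⟨(x + u, y + v), (x, u), (y, v)⟩
  refine sum_nbij' τ τ ?_ ?_ ?_ ?_ ?_ <;>
    rintro ⟨⟨_, _⟩, ⟨_, _⟩, ⟨_, _⟩⟩ h <;>
    simp_all [τ] <;> omega

theorem sum_antidiagonal_antidiagonal_assoc {A : Type*} [AddCommMonoid A] (n : ℕ)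
    (G : ℕ → ℕ → ℕ → A) :
    ∑ ab ∈ antidiagonal n, ∑ pq ∈ antidiagonal ab.1, G pq.1 pq.2 ab.2 =
      ∑ qc ∈ antidiagonal n, ∑ pb ∈ antidiagonal qc.2, G pb.1 qc.1 pb.2 := by
  rw [sum_sigma', sum_sigma']
  let σ : (_ : ℕ × ℕ) × (ℕ × ℕ) → (_ : ℕ × ℕ) × (ℕ × ℕ) :=
    fun ⟨(_, b), (p, q)⟩ => ⟨(q, p + b), (p, b)⟩
  let σ' : (_ : ℕ × ℕ) × (ℕ × ℕ) → (_ : ℕ × ℕ) × (ℕ × ℕ) :=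
    fun ⟨(q, _), (p, b)⟩ => ⟨(p + q, b), (p, q)⟩
  refine sum_nbij' σ σ' ?_ ?_ ?_ ?_ ?_ <;>
    rintro ⟨⟨_, _⟩, ⟨_, _⟩⟩ h <;>
    simp_all [σ, σ'] <;> omega

theorem sum_antidiagonal_choose_smul_neg_one_pow {S : Type*} [Ring S] (w : ℕ) :
    ∑ xu ∈ antidiagonal w, w.choose xu.1 • (-1 : S) ^ xu.2 = if w = 0 then 1 else 0 := by
  simpa [zero_pow_eq] using ((Commute.one_left (-1 : S)).add_pow' w).symm

theorem sum_antidiagonal_neg_one_pow_smul_sum_sum_choose {S A : Type*} [CommRing S]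
    [AddCommGroup A] [Module S A] (n : ℕ) (h : ℕ → ℕ → ℕ → A) :
    ∑ pb ∈ antidiagonal n, (-1 : S) ^ pb.2 • ∑ uv ∈ antidiagonal pb.2, ∑ xy ∈ antidiagonal pb.1,
        (xy.1 + uv.1).choose xy.1 • h (xy.1 + uv.1) xy.2 uv.2 =
      ∑ yv ∈ antidiagonal n, (-1 : S) ^ yv.2 • h 0 yv.1 yv.2 := by
  let F : ℕ → ℕ → ℕ → ℕ → A := fun x y u v =>
    ((x + u).choose x • (-1 : S) ^ u) • (-1 : S) ^ v • h (x + u) y v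
  calc _ = ∑ pb ∈ antidiagonal n, ∑ xy ∈ antidiagonal pb.1, ∑ uv ∈ antidiagonal pb.2,
        F xy.1 xy.2 uv.1 uv.2 := by
        refine sum_congr rfl fun pb _ => ?_
        rw [sum_comm, smul_sum]
        refine sum_congr rfl fun xy _ => ?_
        rw [smul_sum]
        refine sum_congr rfl fun uv huv => ?_
        rw [← mem_antidiagonal.mp huv]
        simp only [F]
        module
    _ = ∑ wz ∈ antidiagonal n, (∑ xu ∈ antidiagonal wz.1, wz.1.choose xu.1 • (-1 : S) ^ xu.2) •
          ∑ yv ∈ antidiagonal wz.2, (-1 : S) ^ yv.2 • h wz.1 yv.1 yv.2 := by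
        rw [sum_antidiagonal_antidiagonal_comm]
        refine sum_congr rfl fun wz _ => ?_
        rw [sum_smul]
        refine sum_congr rfl fun xu hxu => ?_
        rw [smul_sum, ← mem_antidiagonal.mp hxu]
    _ = _ := by
        rw [sum_eq_single_of_mem (0, n) (by simp) fun wz hwz hne => ?_]
        · simp
        · rw [sum_antidiagonal_choose_smul_neg_one_pow, if_neg, zero_smul]
          rintro hw
          exact hne (Prod.ext hw (by simpa [hw] using hwz))

end Finset.Nat

section Connection

variable {R M M' : Type*} [CommRing R] [AddCommGroup M] [Module R M] [AddCommGroup M']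
  [Module R M']

structure IsIterativeConnection (d : ℕ → R →+ R) (D : ℕ → M →+ M) : Prop where
  zero_apply : ∀ m, D 0 m = m
  apply_smul : ∀ i (r : R) m, D i (r • m) = ∑ p ∈ antidiagonal i, d p.1 r • D p.2 m
  comp_apply : ∀ i j m, D i (D j m) = (i + j).choose i • D (i + j) m

abbrev IsIterativeDerivation (d : ℕ → R →+ R) : Prop := IsIterativeConnection d d

/-- The connection induced on `Hom(M, M')`. -/
def homConn (D : ℕ → M →+ M) (D' : ℕ → M' →+ M') (c : ℕ) : (M →+ M') →+ (M →+ M') :=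
  AddMonoidHom.mk'
    (fun φ => ∑ ab ∈ antidiagonal c, (-1 : ℤ) ^ ab.2 • (D' ab.1).comp (φ.comp (D ab.2)))
    fun φ ψ => by
      simp only [AddMonoidHom.comp_add, AddMonoidHom.add_comp, smul_add, sum_add_distrib]

theorem homConn_apply (D : ℕ → M →+ M) (D' : ℕ → M' →+ M') (c : ℕ) (φ : M →+ M') (m : M) :
    homConn D D' c φ m = ∑ ab ∈ antidiagonal c, (-1 : ℤ) ^ ab.2 • D' ab.1 (φ (D ab.2 m)) := by
  simp [homConn]

variable {d : ℕ → R →+ R} {D : ℕ → M →+ M} {D' : ℕ → M' →+ M'}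

theorem homConn_map_smul (hd : IsIterativeDerivation d) (hD : IsIterativeConnection d D)
    (hD' : IsIterativeConnection d D') (c : ℕ) (φ : M →ₗ[R] M') (r : R) (m : M) :
    homConn D D' c φ (r • m) = r • homConn D D' c φ m := by
  let h : ℕ → ℕ → ℕ → M' := fun w y v => d w r • D' y (φ (D v m))
  calc homConn D D' c φ (r • m)
      = ∑ pb ∈ antidiagonal c, (-1 : ℤ) ^ pb.2 • ∑ uv ∈ antidiagonal pb.2,
          ∑ xy ∈ antidiagonal pb.1, (xy.1 + uv.1).choose xy.1 • h (xy.1 + uv.1) xy.2 uv.2 := by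
        rw [homConn_apply]
        refine sum_congr rfl fun pb _ => ?_
        simp only [AddMonoidHom.coe_coe, hD.apply_smul, map_sum, map_smul, hD'.apply_smul,
          hd.comp_apply, smul_assoc, h]
    _ = r • homConn D D' c φ m := by
        rw [Finset.Nat.sum_antidiagonal_neg_one_pow_smul_sum_sum_choose, homConn_apply, smul_sum]
        simp only [h, hd.zero_apply, AddMonoidHom.coe_coe, smul_comm r]

theorem homConn_smul_id (hD : IsIterativeConnection d D) (t : ℕ) (r : R) :
    homConn D D t (DistribSMul.toAddMonoidHom M r) =
      DistribSMul.toAddMonoidHom M (d t r) := by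
  ext m
  let h : ℕ → ℕ → ℕ → M := fun w y v => if v = 0 then d y r • D w m else 0
  calc homConn D D t (DistribSMul.toAddMonoidHom M r) m
      = ∑ pb ∈ antidiagonal t, (-1 : ℤ) ^ pb.2 • ∑ uv ∈ antidiagonal pb.2,
          ∑ xy ∈ antidiagonal pb.1, (xy.1 + uv.1).choose xy.1 • h (xy.1 + uv.1) xy.2 uv.2 := by
        rw [homConn_apply]
        refine sum_congr rfl fun pb _ => ?_
        rw [sum_eq_single_of_mem (pb.2, 0) (by simp) fun uv huv hne => ?_]
        · simp only [DistribSMul.toAddMonoidHom_apply, hD.apply_smul, hD.comp_apply, h, if_true]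
          rw [← Finset.Nat.sum_antidiagonal_swap]
          simp only [Prod.fst_swap, Prod.snd_swap, smul_comm (d _ r)]
        · have hv : uv.2 ≠ 0 := fun hv => hne (Prod.ext (by simpa [hv] using huv) hv)
          simp [h, hv]
    _ = d t r • m := by
        rw [Finset.Nat.sum_antidiagonal_neg_one_pow_smul_sum_sum_choose,
          sum_eq_single_of_mem (t, 0) (by simp) fun yv hyv hne => ?_]
        · simp [h, hD.zero_apply]
        · have hv : yv.2 ≠ 0 := fun hv => hne (Prod.ext (by simpa [hv] using hyv) hv)
          simp [h, hv]

theorem homConn_smulRight (hD : IsIterativeConnection d D) (t : ℕ) (f : M →ₗ[R] R) (x m : M) :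
    homConn D D t (f.smulRight x : M →+ M) m =
      ∑ qc ∈ antidiagonal t, homConn D d qc.2 f m • D qc.1 x := by
  simp only [homConn_apply, AddMonoidHom.coe_coe, LinearMap.smulRight_apply, hD.apply_smul,
    smul_sum, sum_smul, smul_assoc]
  exact Finset.Nat.sum_antidiagonal_antidiagonal_assoc t
    fun p q b => (-1 : ℤ) ^ b • d p (f (D b m)) • D q x

end Connection

section DualBasisIdeal

variable (R M : Type*) [CommRing R] [AddCommGroup M] [Module R M]

def dualBasisIdeal : Ideal R where
  carrier := {r | ∃ (ι : Type) (_ : Fintype ι) (f : ι → M →ₗ[R] R) (x : ι → M),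
    ∀ m, r • m = ∑ i, f i m • x i}
  zero_mem' := ⟨Empty, inferInstance, Empty.elim, Empty.elim, by simp⟩
  add_mem' := by
    rintro a b ⟨ι, _, f, x, hf⟩ ⟨κ, _, g, y, hg⟩
    exact ⟨ι ⊕ κ, inferInstance, Sum.elim f g, Sum.elim x y, fun m => by
      simp [add_smul, hf, hg]⟩
  smul_mem' := by
    rintro c r ⟨ι, _, f, x, hf⟩
    exact ⟨ι, inferInstance, fun i => c • f i, x, fun m => by
      simp [mul_smul, hf, smul_sum]⟩

variable {R M}

theorem projective_of_one_mem_dualBasisIdeal (h : 1 ∈ dualBasisIdeal R M) :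
    Module.Projective R M := by
  obtain ⟨ι, _, f, x, hfx⟩ := h
  exact .of_split (LinearMap.pi f) (Fintype.linearCombination R x) <| LinearMap.ext fun m => by
    simp [Fintype.linearCombination_apply, ← hfx]

theorem mem_dualBasisIdeal_of_comp_eq {ι : Type} [Fintype ι] {r : R} (g : (ι → R) →ₗ[R] M)
    (f : M →ₗ[R] ι → R) (h : ∀ m, g (f m) = r • m) : r ∈ dualBasisIdeal R M := by
  classical
  refine ⟨ι, inferInstance, fun i => LinearMap.proj i ∘ₗ f, fun i => g (Pi.single i 1),
    fun m => ?_⟩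
  rw [← h, ← (Pi.basisFun R ι).sum_repr (f m)]
  simp

theorem apply_mem_dualBasisIdeal {d : ℕ → R →+ R} {D : ℕ → M →+ M}
    (hd : IsIterativeDerivation d) (hD : IsIterativeConnection d D) {r : R}
    (hr : r ∈ dualBasisIdeal R M) (t : ℕ) : d t r ∈ dualBasisIdeal R M := by
  obtain ⟨ι, _, f, x, hfx⟩ := hr
  have hsum : DistribSMul.toAddMonoidHom M r = ∑ i, ((f i).smulRight (x i) : M →+ M) := by
    ext m
    simp [hfx, AddMonoidHom.finsetSum_apply]
  let f' : ℕ → ι → M →ₗ[R] R := fun c i =>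
    ⟨(homConn D d c (f i)).toAddHom, homConn_map_smul hd hD hd c (f i)⟩
  refine ⟨ι × antidiagonal t, inferInstance, fun ip => f' ip.2.1.2 ip.1,
    fun ip => D ip.2.1.1 (x ip.1), fun m => ?_⟩
  rw [Fintype.sum_prod_type, ← DistribSMul.toAddMonoidHom_apply, ← homConn_smul_id hD, hsum,
    map_sum, AddMonoidHom.finsetSum_apply]
  refine sum_congr rfl fun i _ => ?_
  rw [homConn_smulRight hD t (f i) (x i) m, ← sum_coe_sort]
  rfl

end DualBasisIdeal

namespace IsIterativeDerivation

variable {R : Type*} [CommRing R] {d : ℕ → R →+ R}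

theorem apply_mul (hd : IsIterativeDerivation d) (i : ℕ) (r s : R) :
    d i (r * s) = ∑ p ∈ antidiagonal i, d p.1 r * d p.2 s :=
  hd.apply_smul i r s

theorem apply_pow_mem_of_forall_lt_mem (hd : IsIterativeDerivation d) {I : Ideal R} {x : R}
    {i : ℕ} (hx : ∀ j < i, d j x ∈ I) (m : ℕ) :
    (∀ q < i * m, d q (x ^ m) ∈ I) ∧ d (i * m) (x ^ m) - d i x ^ m ∈ I := by
  induction m with
  | zero => simp [hd.zero_apply]
  | succ m ih =>
    obtain ⟨hlow, htop⟩ := ih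
    have hmul : i * (m + 1) = i * m + i := mul_add_one i m
    have hterm : ∀ q ≤ i * (m + 1), ∀ pq ∈ antidiagonal q, pq ≠ (i, i * m) →
        d pq.1 x * d pq.2 (x ^ m) ∈ I := by
      rintro q hq ⟨p, p'⟩ hpq hne
      rw [HasAntidiagonal.mem_antidiagonal] at hpq
      by_cases hp : p < i
      · exact I.mul_mem_right _ (hx p hp)
      · refine I.mul_mem_left _ (hlow p' ?_)
        by_contra
        exact hne (Prod.ext (by dsimp; omega) (by dsimp; omega))
    refine ⟨fun q hq => ?_, ?_⟩
    · rw [pow_succ', hd.apply_mul]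
      exact I.sum_mem fun pq hpq => hterm q hq.le pq hpq fun h => by
        rw [h, HasAntidiagonal.mem_antidiagonal] at hpq
        omega
    · rw [pow_succ', hd.apply_mul, ← add_sum_erase _ _ (a := (i, i * m)) (by simp [hmul, add_comm]),
        pow_succ', add_sub_right_comm, ← mul_sub]
      exact I.add_mem (I.mul_mem_left _ htop) (I.sum_mem fun pq hpq =>
        hterm _ le_rfl pq (mem_of_mem_erase hpq) (ne_of_mem_erase hpq))

theorem isNilpotent_apply (hd : IsIterativeDerivation d) {x : R} (hx : IsNilpotent x) (i : ℕ) :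
    IsNilpotent (d i x) := by
  induction i using Nat.strong_induction_on with
  | _ i ih =>
    obtain ⟨k, hk⟩ := hx
    have h := (hd.apply_pow_mem_of_forall_lt_mem (I := nilradical R) ih k).2
    rw [hk, map_zero, zero_sub, neg_mem_iff] at h
    exact (mem_nilradical.mp h).of_pow

theorem isReduced_of_simple [Nontrivial R] (hd : IsIterativeDerivation d)
    (hsimple : ∀ I : Ideal R, (∀ (i : ℕ), ∀ x ∈ I, d i x ∈ I) → I = ⊥ ∨ I = ⊤) : IsReduced R := by
  refine nilradical_eq_bot_iff.mp <| (hsimple _ fun i x hx =>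
    mem_nilradical.mpr (hd.isNilpotent_apply (mem_nilradical.mp hx) i)).resolve_right fun h => ?_
  exact not_isNilpotent_one (mem_nilradical.mp (h ▸ Submodule.mem_top))

end IsIterativeDerivation

section Minors

variable {R : Type*} [CommRing R] {n : ℕ}

theorem Matrix.det_of_cons_cons {e : ℕ} (v : Fin e → Fin n → R) (c : Fin e → Fin n)
    (z : Fin n → R) (i : Fin n) (hz : ∀ b, z (c b) = 0) :
    (Matrix.of fun a b => (Fin.cons z v : Fin (e + 1) → Fin n → R) a
      ((Fin.cons i c : Fin (e + 1) → Fin n) b)).det =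
      z i * (Matrix.of fun a b => v a (c b)).det := by
  rw [Matrix.det_succ_row_zero, Fin.sum_univ_succ]
  simp [hz]
  rfl

variable (K : Submodule R (Fin n → R))

theorem exists_det_ne_zero_forall_det_succ_eq_zero [Nontrivial R] :
    ∃ (e : ℕ) (v : Fin e → Fin n → R) (c : Fin e → Fin n), (∀ a, v a ∈ K) ∧
      (Matrix.of fun a b => v a (c b)).det ≠ 0 ∧
      ∀ (w : Fin (e + 1) → Fin n → R) (c' : Fin (e + 1) → Fin n), (∀ a, w a ∈ K) →
        (Matrix.of fun a b => w a (c' b)).det = 0 := by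
  let P : ℕ → Prop := fun j => ∃ (v : Fin j → Fin n → R) (c : Fin j → Fin n),
    (∀ a, v a ∈ K) ∧ (Matrix.of fun a b => v a (c b)).det ≠ 0
  have h0 : P 0 := ⟨![], ![], by simp, by simp⟩
  have hn : ¬ P (n + 1) := by
    rintro ⟨v, c, -, h⟩
    obtain ⟨b₁, b₂, hne, heq⟩ := Fintype.exists_ne_map_eq_of_card_lt c (by simp)
    exact h (Matrix.det_zero_of_column_eq hne (by simp [heq]))
  obtain ⟨e, ⟨v, c, hv, hδ⟩, hmax⟩ : ∃ e, P e ∧ ¬ P (e + 1) := by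
    by_contra! h
    exact hn (Nat.rec h0 h (n + 1))
  refine ⟨e, v, c, hv, hδ, fun w c' hw => ?_⟩
  by_contra h
  exact hmax ⟨w, c', hw, h⟩

variable {K}

theorem exists_linearMap_sub_smul_mem_and_smul_eq_zero {e : ℕ} {v : Fin e → Fin n → R}
    {c : Fin e → Fin n} (hv : ∀ a, v a ∈ K)
    (hmax : ∀ (w : Fin (e + 1) → Fin n → R) (c' : Fin (e + 1) → Fin n), (∀ a, w a ∈ K) →
      (Matrix.of fun a b => w a (c' b)).det = 0) :
    ∃ P : (Fin n → R) →ₗ[R] Fin n → R,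
      (∀ u, P u - (Matrix.of fun a b => v a (c b)).det • u ∈ K) ∧
      ∀ u ∈ K, (Matrix.of fun a b => v a (c b)).det • P u = 0 := by
  set A := Matrix.of fun a b => v a (c b)
  let Q : (Fin n → R) →ₗ[R] Fin n → R :=
    Fintype.linearCombination R v ∘ₗ A.adjugate.vecMulLinear ∘ₗ LinearMap.funLeft R R c
  have hQ : ∀ u, Q u ∈ K := fun u => by
    simp only [Q, LinearMap.comp_apply, Fintype.linearCombination_apply]
    exact K.sum_mem fun a _ => K.smul_mem _ (hv a)
  have hQc : ∀ u b, Q u (c b) = A.det * u (c b) := by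
    intro u b
    calc Q u (c b) = Matrix.vecMul (Matrix.vecMul (u ∘ c) A.adjugate) A b := by
          simp [Q, Fintype.linearCombination_apply, Matrix.vecMul, dotProduct, A]
      _ = A.det * u (c b) := by
          rw [Matrix.vecMul_vecMul, Matrix.adjugate_mul, Matrix.vecMul_smul, Matrix.vecMul_one]
          rfl
  refine ⟨A.det • LinearMap.id - Q, fun u => by simpa using K.neg_mem (hQ u), fun u hu => ?_⟩
  have hz : A.det • u - Q u ∈ K := K.sub_mem (K.smul_mem _ hu) (hQ u)
  ext i
  -- bordering `A` by the row `P u = A.det • u - Q u` (zero on the columns `c`) and the column `i`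
  -- gives an `(e+1)`-minor from `K`, equal to `(P u) i * A.det`
  have := Matrix.det_of_cons_cons v c (A.det • u - Q u) i fun b => by simp [hQc]
  rw [hmax _ _ (Fin.forall_fin_succ.mpr ⟨by simpa using hz, by simpa using hv⟩)] at this
  simpa [mul_comm] using this.symm

end Minors

theorem exists_ne_zero_mul_self_mem_dualBasisIdeal (R M : Type*) [CommRing R] [Nontrivial R]
    [AddCommGroup M] [Module R M] [Module.Finite R M] :
    ∃ δ : R, δ ≠ 0 ∧ δ * δ ∈ dualBasisIdeal R M := by
  obtain ⟨n, π, hπ⟩ := Module.Finite.exists_fin' R M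
  obtain ⟨e, v, c, hv, hδ, hmax⟩ := exists_det_ne_zero_forall_det_succ_eq_zero (LinearMap.ker π)
  obtain ⟨P, hPδ, hPK⟩ := exists_linearMap_sub_smul_mem_and_smul_eq_zero hv hmax
  set δ := (Matrix.of fun a b => v a (c b)).det
  have hπP : ∀ u, π (P u) = δ • π u := fun u => by
    rw [← sub_eq_zero, ← map_smul, ← map_sub]
    exact hPδ u
  let G : M →ₗ[R] Fin n → R :=
    (LinearMap.ker π).liftQ (δ • P) hPK ∘ₗ (π.quotKerEquivOfSurjective hπ).symm
  refine ⟨δ, hδ, mem_dualBasisIdeal_of_comp_eq π G fun m => ?_⟩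
  obtain ⟨u, rfl⟩ := hπ m
  have hG : G (π u) = δ • P u := by
    simp only [G, LinearMap.comp_apply, LinearEquiv.coe_coe,
      LinearMap.quotKerEquivOfSurjective_symm_apply]
    rfl
  rw [hG, map_smul, hπP, smul_smul]

theorem projective_of_isIterativeConnection {R M : Type*} [CommRing R] [Nontrivial R]
    [AddCommGroup M] [Module R M] [Module.Finite R M] {d : ℕ → R →+ R} {D : ℕ → M →+ M}
    (hd : IsIterativeDerivation d)
    (hsimple : ∀ I : Ideal R, (∀ (i : ℕ), ∀ x ∈ I, d i x ∈ I) → I = ⊥ ∨ I = ⊤)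
    (hD : IsIterativeConnection d D) : Module.Projective R M := by
  have := hd.isReduced_of_simple hsimple
  obtain ⟨δ, hδ, hδJ⟩ := exists_ne_zero_mul_self_mem_dualBasisIdeal R M
  rcases hsimple _ fun i r hr => apply_mem_dualBasisIdeal hd hD hr i with hJ | hJ
  · rw [hJ, Ideal.mem_bot, ← sq] at hδJ
    exact absurd (IsReduced.eq_zero δ ⟨2, hδJ⟩) hδ
  · exact projective_of_one_mem_dualBasisIdeal (hJ ▸ Submodule.mem_top)

namespace Submodule

variable {R M : Type*} [CommRing R] [AddCommGroup M] [Module R M] (N : Submodule R M)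

theorem finite_of_projective_quotient [Module.Finite R M] [Module.Projective R (M ⧸ N)] :
    Module.Finite R N := by
  have := Module.finitePresentation_of_projective R (M ⧸ N)
  simpa [Module.Finite.iff_fg] using Module.FinitePresentation.fg_ker N.mkQ N.mkQ_surjective

variable {D : ℕ → M →+ M} (hN : ∀ i, ∀ m ∈ N, D i m ∈ N)

def restrictConn (i : ℕ) : N →+ N :=
  AddMonoidHom.mk' (fun x : N => ⟨D i x, hN i x x.2⟩) fun x y =>
    Subtype.ext (map_add (D i) (x : M) y)

def quotientConn (i : ℕ) : M ⧸ N →+ M ⧸ N :=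
  QuotientAddGroup.map N.toAddSubgroup N.toAddSubgroup (D i) (hN i)

theorem quotientConn_mkQ (i : ℕ) (m : M) : N.quotientConn hN i (N.mkQ m) = N.mkQ (D i m) :=
  rfl

variable {N} {d : ℕ → R →+ R}

theorem _root_.IsIterativeConnection.restrict (hD : IsIterativeConnection d D) :
    IsIterativeConnection d (N.restrictConn hN) where
  zero_apply x := Subtype.ext (hD.zero_apply x)
  apply_smul i r x := Subtype.ext (by simp [restrictConn, hD.apply_smul])
  comp_apply i j x := Subtype.ext (by simp [restrictConn, hD.comp_apply])

theorem _root_.IsIterativeConnection.quotient (hD : IsIterativeConnection d D) :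
    IsIterativeConnection d (N.quotientConn hN) where
  zero_apply z := by
    obtain ⟨m, rfl⟩ := N.mkQ_surjective z
    rw [quotientConn_mkQ, hD.zero_apply]
  apply_smul i r z := by
    obtain ⟨m, rfl⟩ := N.mkQ_surjective z
    rw [← map_smul, quotientConn_mkQ, hD.apply_smul, map_sum]
    simp only [map_smul, quotientConn_mkQ]
  comp_apply i j z := by
    obtain ⟨m, rfl⟩ := N.mkQ_surjective z
    rw [quotientConn_mkQ, quotientConn_mkQ, hD.comp_apply, map_nsmul, quotientConn_mkQ]

end Submodule

/-- **Proposition 5.4 of Nagy–Szamuely** (generalizing André), subquotient version: any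
ID-submodule `N` of a finitely generated iterative differential module `M` over a simple
iterative differential ring `(R, d)` is projective, and so is the quotient `M/N`. -/
theorem stmt12 (R : Type u) [CommRing R] [Nontrivial R]
    (d : ℕ → R →+ R)
    (h0 : ∀ r : R, d 0 r = r)
    (hmul : ∀ (i : ℕ) (r s : R),
      d i (r * s) = ∑ p ∈ Finset.HasAntidiagonal.antidiagonal i, d p.1 r * d p.2 s)
    (hcomp : ∀ (i j : ℕ) (r : R), d i (d j r) = (i + j).choose i • d (i + j) r)
    (hsimple : ∀ I : Ideal R, (∀ (i : ℕ), ∀ x ∈ I, d i x ∈ I) → I = ⊥ ∨ I = ⊤)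
    (M : Type v) [AddCommGroup M] [Module R M] [Module.Finite R M]
    (Dm : ℕ → M →+ M)
    (hDm0 : ∀ m : M, Dm 0 m = m)
    (hDmsmul : ∀ (i : ℕ) (r : R) (m : M),
      Dm i (r • m) = ∑ p ∈ Finset.HasAntidiagonal.antidiagonal i, d p.1 r • Dm p.2 m)
    (hDmcomp : ∀ (i j : ℕ) (m : M), Dm i (Dm j m) = (i + j).choose i • Dm (i + j) m)
    (N : Submodule R M) (hN : ∀ (i : ℕ), ∀ m ∈ N, Dm i m ∈ N) :
    Module.Projective R N ∧ Module.Projective R (M ⧸ N) := by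
  have hd : IsIterativeDerivation d := ⟨h0, hmul, hcomp⟩
  have hD : IsIterativeConnection d Dm := ⟨hDm0, hDmsmul, hDmcomp⟩
  have hQ : Module.Projective R (M ⧸ N) :=
    projective_of_isIterativeConnection hd hsimple (hD.quotient hN)
  have := N.finite_of_projective_quotient
  exact ⟨projective_of_isIterativeConnection hd hsimple (hD.restrict hN), hQ⟩
end

section
/- Let (A, σ) be a difference ring such that A is a nontrivial commutative noetherian ring, σ : A → A is a flat ring endomorphism (i.e. A is flat as an A-module via σ), and (A, σ) is simple. Let M be a finitely generated A-module equipped with a σ-semilinear additive map Σ : M → M (Σ(a·m) = σ(a)·Σ(m)) which is étale, i.e. the A-linear map A_σ ⊗_A M → M induced by λ ⊗ m ↦ λ·Σ(m) is bijective, where A_σ denotes A viewed as a right A-module via σ (with its left A-module structure by multiplication). Then M is a projective A-module. (Part (1) of the paper's Proposition that finitely generated étale difference modules over a simple noetherian difference ring with flat endomorphism are projective.) -/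
universe u v

open TensorProduct

/-- Type synonym: an `A`-module `M` with its `A`-module structure twisted by the ring
endomorphism `σ : A →+* A`, i.e. `a • m = σ a • m`.  For `M = A` this is the module `A_σ`
("`A` regarded as a module over itself via `σ`"). -/
@[nolint unusedArguments]
def Twist {A : Type u} [CommRing A] (_σ : A →+* A) (M : Type v) : Type v := M

instance {A : Type u} [CommRing A] (σ : A →+* A) (M : Type v) [AddCommGroup M] :
    AddCommGroup (Twist σ M) := inferInstanceAs (AddCommGroup M)

instance {A : Type u} [CommRing A] (σ : A →+* A) (M : Type v) [AddCommGroup M] [Module A M] :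
    Module A (Twist σ M) := Module.compHom M σ

/-- The identity map, regarded as a map from the twisted module to the original one. -/
def Twist.out {A : Type u} [CommRing A] {σ : A →+* A} {M : Type v} (m : Twist σ M) : M := m

@[simp] lemma Twist.out_zero {A : Type u} [CommRing A] {σ : A →+* A} {M : Type v}
    [AddCommGroup M] : (0 : Twist σ M).out = 0 := rfl

@[simp] lemma Twist.out_add {A : Type u} [CommRing A] {σ : A →+* A} {M : Type v}
    [AddCommGroup M] (x y : Twist σ M) : (x + y).out = x.out + y.out := rfl

@[simp] lemma Twist.out_smul {A : Type u} [CommRing A] {σ : A →+* A} {M : Type v}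
    [AddCommGroup M] [Module A M] (a : A) (x : Twist σ M) :
    (a • x).out = σ a • x.out := rfl

/-- The canonical additive map `A_σ ⊗_A M → M` induced by `λ ⊗ m ↦ λ · Σ(m)`, for a
`σ`-semilinear additive endomorphism `Σ` of the `A`-module `M`.  The difference module
`(M, Σ)` is *étale* precisely when this map is bijective. -/
noncomputable def etaleLift {A : Type u} [CommRing A] (σ : A →+* A)
    {M : Type v} [AddCommGroup M] [Module A M]
    (S : M →+ M) (hS : ∀ (a : A) (m : M), S (a • m) = σ a • S m) :
    TensorProduct A (Twist σ A) M →+ M :=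
  TensorProduct.liftAddHom
    { toFun := fun lam =>
        { toFun := fun m => lam.out • S m
          map_zero' := by simp
          map_add' := fun m n => by simp [smul_add] }
      map_zero' := by
        ext m
        simp
      map_add' := fun x y => by
        ext m
        simp [add_smul] }
    (by
      intro a lam m
      show (a • lam).out • S m = lam.out • S (a • m)
      rw [Twist.out_smul, hS, smul_assoc]
      exact smul_comm _ _ _)

/-!
The non-free locus `Z` of `M` is closed, so it is determined by its vanishing ideal `I(Z)`.
Étaleness gives `A_σ ⊗_A M ≅ M`, and base change preserves freeness, so `M` is free at `p`
as soon as it is free at `σ⁻¹(p)`; hence `σ` maps `I(Z)` into itself. By simplicity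
`I(Z)` is `A` (so `Z = ∅` and `M` is projective) or `0`. The latter is impossible: it
makes `Z` all of `Spec A`, whereas the nilradical is also a difference ideal, so `A` is
reduced, and then `M` is free at every minimal prime, where the local ring is a field.
-/

def IsDifferenceIdeal {A : Type u} [CommRing A] (σ : A →+* A) (I : Ideal A) : Prop :=
  ∀ x ∈ I, σ x ∈ I

lemma isDifferenceIdeal_nilradical {A : Type u} [CommRing A] (σ : A →+* A) :
    IsDifferenceIdeal σ (nilradical A) :=
  fun _ hx => mem_nilradical.mpr ((mem_nilradical.mp hx).map σ)

lemma isReduced_of_differenceSimple {A : Type u} [CommRing A] [Nontrivial A]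
    (σ : A →+* A) (hsimple : ∀ I : Ideal A, IsDifferenceIdeal σ I → I = ⊥ ∨ I = ⊤) :
    IsReduced A :=
  nilradical_eq_bot_iff.mp <| (hsimple _ (isDifferenceIdeal_nilradical σ)).resolve_right
    fun h => not_isNilpotent_one (mem_nilradical.mp (h ▸ Submodule.mem_top))

lemma PrimeSpectrum.eq_univ_of_isClosed_of_vanishingIdeal_eq_bot {R : Type*} [CommRing R]
    {Z : Set (PrimeSpectrum R)} (hZ : IsClosed Z) (h : vanishingIdeal Z = ⊥) : Z = Set.univ := by
  rw [← hZ.closure_eq, ← zeroLocus_vanishingIdeal_eq_closure, h, Submodule.bot_coe,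
    zeroLocus_singleton_zero]

namespace Module

variable {R : Type*} [CommRing R] {M : Type*} [AddCommGroup M] [Module R M]

lemma mem_freeLocus_of_mem_minimalPrimes [IsReduced R] {q : PrimeSpectrum R}
    (hq : q.asIdeal ∈ minimalPrimes R) : q ∈ freeLocus R M := by
  have : Ring.KrullDimLE 0 (Localization.AtPrime q.asIdeal) := .of_isLocalization _ hq _
  let : Field (Localization.AtPrime q.asIdeal) := Ring.KrullDimLE.isField_of_isReduced.toField
  exact Module.Free.of_divisionRing _ _

lemma freeLocus_eq_univ_of_vanishingIdeal_compl_eq_bot [IsReduced R] [FinitePresentation R M]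
    (h : PrimeSpectrum.vanishingIdeal (freeLocus R M)ᶜ = ⊥) : freeLocus R M = Set.univ := by
  have hZ := PrimeSpectrum.eq_univ_of_isClosed_of_vanishingIdeal_eq_bot
    isOpen_freeLocus.isClosed_compl h
  refine Set.eq_univ_of_forall fun p => ?_
  obtain ⟨q, hq, -⟩ := Ideal.exists_minimalPrimes_le (bot_le : ⊥ ≤ p.asIdeal)
  exact absurd (mem_freeLocus_of_mem_minimalPrimes (q := ⟨q, hq.1.1⟩) hq)
    (hZ ▸ Set.mem_univ _)

end Module

section Etale

variable {A : Type u} [CommRing A] (σ : A →+* A)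

instance : CommRing (Twist σ A) := inferInstanceAs (CommRing A)

instance : Algebra A (Twist σ A) := σ.toAlgebra

variable {M : Type v} [AddCommGroup M] [Module A M]
  (S : M →+ M) (hS : ∀ (a : A) (m : M), S (a • m) = σ a • S m)

lemma mem_freeLocus_of_comap_mem_freeLocus (hetale : Function.Bijective (etaleLift σ S hS))
    {p : PrimeSpectrum A} (hp : PrimeSpectrum.comap σ p ∈ Module.freeLocus A M) :
    p ∈ Module.freeLocus A M := by
  -- `M` as a module over `A_σ`, which is `A` as a ring
  let : Module (Twist σ A) M := inferInstanceAs (Module A M)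
  let e : Twist σ A ⊗[A] M ≃ₗ[Twist σ A] M := LinearEquiv.ofBijective
    { etaleLift σ S hS with
      map_smul' := fun b x => by
        induction x using TensorProduct.induction_on with
        | zero => simp
        | tmul lam m => exact mul_smul b lam.out (S m)
        | add x y hx hy =>
          show etaleLift σ S hS (b • (x + y)) = b • etaleLift σ S hS (x + y)
          rw [smul_add, map_add, map_add, smul_add]
          exact congrArg₂ (· + ·) hx hy }
    hetale
  exact (Module.freeLocus_congr e).le (Module.comap_freeLocus_le (A := Twist σ A) hp)

lemma isDifferenceIdeal_vanishingIdeal_compl_freeLocus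
    (hetale : Function.Bijective (etaleLift σ S hS)) :
    IsDifferenceIdeal σ (PrimeSpectrum.vanishingIdeal (Module.freeLocus A M)ᶜ) := by
  intro x hx
  rw [PrimeSpectrum.mem_vanishingIdeal] at hx ⊢
  exact fun p hp => hx _ fun hfree => hp (mem_freeLocus_of_comap_mem_freeLocus σ S hS hetale hfree)

end Etale

theorem stmt13_general (A : Type u) [CommRing A] [Nontrivial A] [IsNoetherianRing A]
    (σ : A →+* A)
    (hsimple : ∀ I : Ideal A, (∀ x ∈ I, σ x ∈ I) → I = ⊥ ∨ I = ⊤)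
    (M : Type v) [AddCommGroup M] [Module A M] [Module.Finite A M]
    (S : M →+ M) (hS : ∀ (a : A) (m : M), S (a • m) = σ a • S m)
    (hetale : Function.Bijective (etaleLift σ S hS)) :
    Module.Projective A M := by
  have := Module.finitePresentation_of_finite A M
  have := isReduced_of_differenceSimple σ hsimple
  rw [← Module.freeLocus_eq_univ_iff]
  rcases hsimple _ (isDifferenceIdeal_vanishingIdeal_compl_freeLocus σ S hS hetale) with h | h
  · exact Module.freeLocus_eq_univ_of_vanishingIdeal_compl_eq_bot h
  · exact Set.compl_empty_iff.mp (PrimeSpectrum.vanishingIdeal_eq_top_iff.mp h)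

/-- **Part (1) of Proposition 7.1 of Nagy–Szamuely**: a finitely generated étale difference
module over a simple noetherian difference ring `(A, σ)` with flat endomorphism `σ` is a
projective `A`-module. -/
theorem stmt13 (A : Type u) [CommRing A] [Nontrivial A] [IsNoetherianRing A]
    (σ : A →+* A) (hflat : RingHom.Flat σ)
    (hsimple : ∀ I : Ideal A, (∀ x ∈ I, σ x ∈ I) → I = ⊥ ∨ I = ⊤)
    (M : Type v) [AddCommGroup M] [Module A M] [Module.Finite A M]
    (S : M →+ M) (hS : ∀ (a : A) (m : M), S (a • m) = σ a • S m)
    (hetale : Function.Bijective (etaleLift σ S hS)) :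
    Module.Projective A M :=
  stmt13_general A σ hsimple M S hS hetale
end
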